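/- Under the assumptions of the CSK convergence theorem (S a subspace embedding for A with distortion ε ∈ (0,1), x₀ in the row space of A, Ax⋆ = b with x⋆ in the row space of A), the iterates satisfy ‖x_k - x⋆‖₂² ≤ (1 - (1-ε)³ σ_r(A)²/(n ‖A‖₂²))^k ‖x₀ - x⋆‖₂² for all k ≥ 0; in particular x_k → x⋆ since 0 ≤ 1 - (1-ε)³ σ_r(A)²/(n‖A‖₂²) < 1. -/

import Mathlib

open scoped BigOperators

/-- Squared Euclidean norm of a vector in `ℝ^n`. -/
noncomputable def sqNorm {n : ℕ} (x : Fin n → ℝ) : ℝ := ∑ i, x i ^ 2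

/-- Squared Frobenius norm of a matrix. -/
noncomputable def frobSq {d n : ℕ} (M : Matrix (Fin d) (Fin n) ℝ) : ℝ :=
  ∑ i, ∑ j, (M i j) ^ 2

/-- The `k`-th largest singular value of a real matrix, via the Courant–Fischer
max-min characterization: the supremum of nonnegative `c` such that some
`k`-dimensional subspace `V` satisfies `‖Ay‖ ≥ c‖y‖` for all `y ∈ V`. -/
noncomputable def sv {m n : ℕ} (A : Matrix (Fin m) (Fin n) ℝ) (k : ℕ) : ℝ :=
  sSup {c : ℝ | 0 ≤ c ∧ ∃ V : Submodule ℝ (Fin n → ℝ), Module.finrank ℝ V = k ∧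
    ∀ y ∈ V, c ^ 2 * sqNorm y ≤ sqNorm (A.mulVec y)}

/-!
A Kaczmarz step is the orthogonal projection onto the hyperplane of the selected sketched row
`(SA)ᵢ`, so it lowers `‖x_k - x⋆‖²` by exactly `rᵢ² / ‖(SA)ᵢ‖²`, where `r = S b - S A x_k`.
Greedy selection makes this at least `‖r‖² / ‖SA‖_F²`. Since `x_k - x⋆` stays in the row space
of `A`, the embedding gives `‖r‖² ≥ (1 - ε) ‖A (x_k - x⋆)‖² ≥ (1 - ε) σ_r² ‖x_k - x⋆‖²`, while
summing the upper embedding bound over the coordinate vectors gives `‖SA‖_F² ≤ (1 + ε) n ‖A‖₂²`.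
As `(1 - ε)² (1 + ε) ≤ 1`, each step removes at least the fraction
`(1 - ε)³ σ_r² / (n ‖A‖₂²)` of the error.
-/

open Matrix Filter Topology

section SqNorm

variable {n : ℕ}

@[simp]
theorem sqNorm_zero : sqNorm (0 : Fin n → ℝ) = 0 := by
  simp [sqNorm]

theorem sqNorm_eq_dotProduct (x : Fin n → ℝ) : sqNorm x = x ⬝ᵥ x := by
  simp only [sqNorm, dotProduct, sq]

theorem sqNorm_nonneg (x : Fin n → ℝ) : 0 ≤ sqNorm x :=
  Finset.sum_nonneg fun i _ => sq_nonneg (x i)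

theorem sqNorm_pos {x : Fin n → ℝ} (hx : x ≠ 0) : 0 < sqNorm x := by
  refine (sqNorm_nonneg x).lt_of_ne' ?_
  rwa [Ne, sqNorm_eq_dotProduct, dotProduct_self_eq_zero]

@[simp]
theorem sqNorm_neg (x : Fin n → ℝ) : sqNorm (-x) = sqNorm x := by
  simp [sqNorm]

theorem sqNorm_smul (t : ℝ) (x : Fin n → ℝ) : sqNorm (t • x) = t ^ 2 * sqNorm x := by
  simp only [sqNorm_eq_dotProduct, smul_dotProduct, dotProduct_smul, smul_eq_mul]
  ring

theorem sqNorm_add (x y : Fin n → ℝ) :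
    sqNorm (x + y) = sqNorm x + 2 * (x ⬝ᵥ y) + sqNorm y := by
  simp only [sqNorm_eq_dotProduct, add_dotProduct, dotProduct_add, dotProduct_comm y x]
  ring

theorem sqNorm_single_one (j : Fin n) : sqNorm (Pi.single j (1 : ℝ)) = 1 := by
  simp [sqNorm, Pi.single_apply]

theorem norm_sq_le_sqNorm (x : Fin n → ℝ) : ‖x‖ ^ 2 ≤ sqNorm x := by
  refine (Real.le_sqrt (norm_nonneg x) (sqNorm_nonneg x)).1 ?_
  refine (pi_norm_le_iff_of_nonneg (Real.sqrt_nonneg _)).2 fun i => ?_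
  refine Real.abs_le_sqrt ?_
  exact Finset.single_le_sum (f := fun j => x j ^ 2) (fun j _ => sq_nonneg _) (Finset.mem_univ i)

theorem sqNorm_le_card_mul_norm_sq (x : Fin n → ℝ) : sqNorm x ≤ n * ‖x‖ ^ 2 := by
  calc sqNorm x ≤ ∑ _i : Fin n, ‖x‖ ^ 2 :=
        Finset.sum_le_sum fun i _ => by
          simpa only [Real.norm_eq_abs, sq_abs] using
            pow_le_pow_left₀ (norm_nonneg _) (norm_le_pi_norm x i) 2
    _ = n * ‖x‖ ^ 2 := by simp

theorem tendsto_of_sqNorm_sub_tendsto_zero {x : ℕ → Fin n → ℝ} {y : Fin n → ℝ}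
    (h : Tendsto (fun k => sqNorm (x k - y)) atTop (𝓝 0)) : Tendsto x atTop (𝓝 y) := by
  rw [tendsto_iff_norm_sub_tendsto_zero]
  have hsq := squeeze_zero (fun k => sq_nonneg _) (fun k => norm_sq_le_sqNorm (x k - y)) h
  simpa only [Real.sqrt_sq (norm_nonneg _), Real.sqrt_zero] using hsq.sqrt

end SqNorm

section Frobenius

variable {p n : ℕ}

theorem sqNorm_mulVec_le_frobSq_mul (M : Matrix (Fin p) (Fin n) ℝ) (y : Fin n → ℝ) :
    sqNorm (M *ᵥ y) ≤ frobSq M * sqNorm y := by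
  rw [frobSq, Finset.sum_mul]
  exact Finset.sum_le_sum fun i _ => Finset.sum_mul_sq_le_sq_mul_sq Finset.univ (M i) y

theorem frobSq_eq_sum_sqNorm_mulVec_single (M : Matrix (Fin p) (Fin n) ℝ) :
    frobSq M = ∑ j, sqNorm (M *ᵥ Pi.single j 1) := by
  rw [frobSq, Finset.sum_comm]
  simp only [mulVec_single_one, sqNorm, col_apply]

theorem frobSq_le_card_mul {M : Matrix (Fin p) (Fin n) ℝ} {C : ℝ}
    (hM : ∀ v, sqNorm (M *ᵥ v) ≤ C * sqNorm v) : frobSq M ≤ n * C := by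
  calc frobSq M ≤ ∑ _j : Fin n, C := by
        rw [frobSq_eq_sum_sqNorm_mulVec_single]
        exact Finset.sum_le_sum fun j _ => by simpa [sqNorm_single_one] using hM (Pi.single j 1)
    _ = n * C := by simp

end Frobenius

section RowSpace

variable {m n R : Type*} [Fintype m]

noncomputable def rowSpace [CommRing R] (A : Matrix m n R) : Submodule R (n → R) :=
  LinearMap.range Aᵀ.mulVecLin

theorem mul_row_mem_rowSpace [CommRing R] {d : Type*} (S : Matrix d m R) (A : Matrix m n R)
    (i : d) : (S * A) i ∈ rowSpace A :=
  ⟨S i, by rw [mulVecLin_apply, mulVec_transpose]; rfl⟩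

variable [Fintype n]

theorem dotProduct_eq_zero_of_mem_rowSpace [CommRing R] {A : Matrix m n R} {z e : n → R}
    (hz : A *ᵥ z = 0) (he : e ∈ rowSpace A) : z ⬝ᵥ e = 0 := by
  obtain ⟨u, rfl⟩ := he
  rw [mulVecLin_apply, dotProduct_mulVec, vecMul_transpose, hz, zero_dotProduct]

theorem eq_zero_of_mem_rowSpace_of_mulVec_eq_zero [CommRing R] [LinearOrder R]
    [IsStrictOrderedRing R] {A : Matrix m n R} {e : n → R} (he : e ∈ rowSpace A)
    (hAe : A *ᵥ e = 0) : e = 0 :=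
  dotProduct_self_eq_zero.1 (dotProduct_eq_zero_of_mem_rowSpace hAe he)

theorem finrank_rowSpace [Field R] (A : Matrix m n R) :
    Module.finrank R (rowSpace A) = A.rank := by
  rw [← rank_transpose A]
  rfl

end RowSpace

section SingularValues

variable {m n : ℕ} (A : Matrix (Fin m) (Fin n) ℝ)

noncomputable def svCandidates (k : ℕ) : Set ℝ :=
  {c : ℝ | 0 ≤ c ∧ ∃ V : Submodule ℝ (Fin n → ℝ), Module.finrank ℝ V = k ∧
    ∀ y ∈ V, c ^ 2 * sqNorm y ≤ sqNorm (A *ᵥ y)}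

variable {A}

theorem exists_ne_zero_of_mem_svCandidates {k : ℕ} (hk : k ≠ 0) {c : ℝ}
    (hc : c ∈ svCandidates A k) : ∃ y ≠ 0, c ^ 2 * sqNorm y ≤ sqNorm (A *ᵥ y) := by
  obtain ⟨-, V, hV, hcV⟩ := hc
  have hV_ne_bot : V ≠ ⊥ := by
    rintro rfl
    exact hk (hV ▸ finrank_bot ℝ (Fin n → ℝ))
  obtain ⟨y, hyV, hy0⟩ := Submodule.exists_mem_ne_zero_of_ne_bot hV_ne_bot
  exact ⟨y, hy0, hcV y hyV⟩

theorem mem_svCandidates_one {c : ℝ} (hc : 0 ≤ c) {y : Fin n → ℝ} (hy : y ≠ 0)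
    (hcy : c ^ 2 * sqNorm y ≤ sqNorm (A *ᵥ y)) : c ∈ svCandidates A 1 := by
  refine ⟨hc, ℝ ∙ y, finrank_span_singleton hy, ?_⟩
  intro _ hy
  obtain ⟨t, rfl⟩ := Submodule.mem_span_singleton.1 hy
  rw [mulVec_smul, sqNorm_smul, sqNorm_smul, mul_left_comm]
  exact mul_le_mul_of_nonneg_left hcy (sq_nonneg t)

theorem svCandidates_subset_one {k : ℕ} (hk : k ≠ 0) : svCandidates A k ⊆ svCandidates A 1 :=
  fun _ hc =>
    let ⟨_, hy, hcy⟩ := exists_ne_zero_of_mem_svCandidates hk hc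
    mem_svCandidates_one hc.1 hy hcy

theorem svCandidates_bddAbove {k : ℕ} (hk : k ≠ 0) : BddAbove (svCandidates A k) := by
  refine ⟨√(frobSq A), fun c hc => Real.le_sqrt_of_sq_le ?_⟩
  obtain ⟨y, hy, hcy⟩ := exists_ne_zero_of_mem_svCandidates hk hc
  exact le_of_mul_le_mul_right (hcy.trans (sqNorm_mulVec_le_frobSq_mul A y)) (sqNorm_pos hy)

theorem sqNorm_mulVec_le_sv_one_sq (v : Fin n → ℝ) :
    sqNorm (A *ᵥ v) ≤ sv A 1 ^ 2 * sqNorm v := by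
  rcases eq_or_ne v 0 with rfl | hv
  · simp
  set c := √(sqNorm (A *ᵥ v) / sqNorm v)
  have hc_sq : c ^ 2 * sqNorm v = sqNorm (A *ᵥ v) := by
    rw [Real.sq_sqrt (div_nonneg (sqNorm_nonneg _) (sqNorm_nonneg _)),
      div_mul_cancel₀ _ (sqNorm_pos hv).ne']
  have hc_le : c ≤ sv A 1 :=
    le_csSup (svCandidates_bddAbove one_ne_zero)
      (mem_svCandidates_one (Real.sqrt_nonneg _) hv hc_sq.le)
  rw [← hc_sq]
  have := sqNorm_nonneg v
  gcongr

theorem exists_pos_mul_sqNorm_le_sqNorm_mulVec :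
    ∃ c > 0, ∀ y ∈ rowSpace A, c * sqNorm y ≤ sqNorm (A *ᵥ y) := by
  let f : rowSpace A →ₗ[ℝ] Fin m → ℝ := A.mulVecLin ∘ₗ (rowSpace A).subtype
  have hf : Function.Injective f := by
    refine (injective_iff_map_eq_zero f).2 fun y hy => ?_
    exact Subtype.ext (eq_zero_of_mem_rowSpace_of_mulVec_eq_zero y.2 hy)
  obtain ⟨K, -, hK⟩ := f.injective_iff_antilipschitz.1 hf
  obtain ⟨c, hc, hcf⟩ := antilipschitzWith_iff_exists_mul_le_norm.1 ⟨K, hK⟩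
  refine ⟨c ^ 2 / (n + 1), by positivity, fun y hy => ?_⟩
  have hy_le : c * ‖y‖ ≤ ‖A *ᵥ y‖ := hcf ⟨y, hy⟩
  calc c ^ 2 / (n + 1) * sqNorm y ≤ c ^ 2 / (n + 1) * ((n + 1) * ‖y‖ ^ 2) := by
        gcongr
        exact (sqNorm_le_card_mul_norm_sq y).trans (by gcongr; linarith)
    _ = (c * ‖y‖) ^ 2 := by field_simp
    _ ≤ ‖A *ᵥ y‖ ^ 2 := by gcongr
    _ ≤ sqNorm (A *ᵥ y) := norm_sq_le_sqNorm _

theorem rank_ne_zero_of_ne_zero (hA : A ≠ 0) : A.rank ≠ 0 := by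
  rw [Matrix.rank, Ne, Submodule.finrank_eq_zero, LinearMap.range_eq_bot, ← toLin'_apply',
    LinearEquiv.map_eq_zero_iff]
  exact hA

theorem exists_pos_mem_svCandidates_rank : ∃ c > 0, c ∈ svCandidates A A.rank := by
  obtain ⟨c, hc, hcA⟩ := exists_pos_mul_sqNorm_le_sqNorm_mulVec (A := A)
  refine ⟨√c, Real.sqrt_pos.2 hc, Real.sqrt_nonneg c, rowSpace A, finrank_rowSpace A,
    fun y hy => ?_⟩
  rw [Real.sq_sqrt hc.le]
  exact hcA y hy

theorem sv_rank_pos (hA : A ≠ 0) : 0 < sv A A.rank := by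
  obtain ⟨_, hc, hcA⟩ := exists_pos_mem_svCandidates_rank (A := A)
  exact hc.trans_le (le_csSup (svCandidates_bddAbove (rank_ne_zero_of_ne_zero hA)) hcA)

theorem sv_rank_le_sv_one (hA : A ≠ 0) : sv A A.rank ≤ sv A 1 :=
  csSup_le_csSup (svCandidates_bddAbove one_ne_zero)
    (exists_pos_mem_svCandidates_rank.imp fun _ h => h.2)
    (svCandidates_subset_one (rank_ne_zero_of_ne_zero hA))

/-- Courant–Fischer: a subspace of dimension `rank A` meets `ker A ⊔ ℝ ∙ e` nontrivially, and on
that sum `A` only sees the `e`-component. -/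
theorem sq_mul_sqNorm_le_of_mem_svCandidates_rank {c : ℝ} (hc : c ∈ svCandidates A A.rank)
    {e : Fin n → ℝ} (he : e ∈ rowSpace A) : c ^ 2 * sqNorm e ≤ sqNorm (A *ᵥ e) := by
  rcases eq_or_ne (A *ᵥ e) 0 with hAe | hAe
  · simp [eq_zero_of_mem_rowSpace_of_mulVec_eq_zero he hAe]
  obtain ⟨hc0, V, hV, hcV⟩ := hc
  have h_not_disjoint : ¬ Disjoint V (LinearMap.ker A.mulVecLin ⊔ ℝ ∙ e) := fun h => by
    have h_sum := Submodule.finrank_add_finrank_le_of_disjoint h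
    rw [Submodule.finrank_sup_span_singleton hAe, hV] at h_sum
    have h_nullity : A.rank + _ = _ := A.mulVecLin.finrank_range_add_finrank_ker
    rw [Module.finrank_fin_fun] at h_sum h_nullity
    omega
  obtain ⟨y, hyV, hyW, hy0⟩ : ∃ y ∈ V, y ∈ LinearMap.ker A.mulVecLin ⊔ ℝ ∙ e ∧ y ≠ 0 := by
    simpa [Submodule.disjoint_def] using h_not_disjoint
  obtain ⟨z, hz, _, ht, rfl⟩ := Submodule.mem_sup.1 hyW
  obtain ⟨t, rfl⟩ := Submodule.mem_span_singleton.1 ht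
  have hAz : A *ᵥ z = 0 := hz
  have hcy := hcV _ hyV
  rw [mulVec_add, mulVec_smul, hAz, zero_add, sqNorm_smul, sqNorm_add, sqNorm_smul,
    dotProduct_smul, dotProduct_eq_zero_of_mem_rowSpace hAz he, smul_zero] at hcy
  rcases eq_or_ne t 0 with rfl | ht0
  · have hz0 : z ≠ 0 := by simpa using hy0
    have hc_sq : c ^ 2 = 0 := by nlinarith [sqNorm_pos hz0, sq_nonneg c]
    simp [hc_sq, sqNorm_nonneg]
  · refine le_of_mul_le_mul_left ?_ (by positivity : 0 < t ^ 2)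
    nlinarith [sqNorm_nonneg z, sq_nonneg c]

theorem sv_rank_sq_mul_sqNorm_le (hA : A ≠ 0) {e : Fin n → ℝ} (he : e ∈ rowSpace A) :
    sv A A.rank ^ 2 * sqNorm e ≤ sqNorm (A *ᵥ e) := by
  rcases eq_or_ne e 0 with rfl | he0
  · simp
  have hpos := sqNorm_pos he0
  have hle : sv A A.rank ≤ √(sqNorm (A *ᵥ e) / sqNorm e) :=
    csSup_le (exists_pos_mem_svCandidates_rank.imp fun _ h => h.2) fun c hc =>
      Real.le_sqrt_of_sq_le ((le_div_iff₀ hpos).2 (sq_mul_sqNorm_le_of_mem_svCandidates_rank hc he))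
  have := pow_le_pow_left₀ (sv_rank_pos hA).le hle 2
  rwa [Real.sq_sqrt (div_nonneg (sqNorm_nonneg _) hpos.le), le_div_iff₀ hpos] at this

theorem one_le_numCols_of_ne_zero (hA : A ≠ 0) : (1 : ℝ) ≤ n := by
  rcases n with _ | n
  · exact absurd (Subsingleton.elim _ _) hA
  · simp

theorem card_mul_sv_one_sq_pos (hA : A ≠ 0) : 0 < n * sv A 1 ^ 2 := by
  have := one_le_numCols_of_ne_zero hA
  have := (sv_rank_pos hA).trans_le (sv_rank_le_sv_one hA)
  positivity

end SingularValues

section Kaczmarz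

variable {n : ℕ}

/-- The orthogonal projection of `y` onto the hyperplane `a ⬝ᵥ v = β`. -/
noncomputable def kaczmarzStep (a : Fin n → ℝ) (β : ℝ) (y : Fin n → ℝ) : Fin n → ℝ :=
  y + ((β - a ⬝ᵥ y) / sqNorm a) • a

theorem sqNorm_kaczmarzStep_sub {a xs : Fin n → ℝ} {β : ℝ} (h : a ⬝ᵥ xs = β) (y : Fin n → ℝ) :
    sqNorm (kaczmarzStep a β y - xs) = sqNorm (y - xs) - (β - a ⬝ᵥ y) ^ 2 / sqNorm a := by
  rcases eq_or_ne a 0 with rfl | ha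
  · simp [kaczmarzStep]
  have h_dot : (y - xs) ⬝ᵥ a = -(β - a ⬝ᵥ y) := by
    rw [sub_dotProduct, dotProduct_comm y, dotProduct_comm xs, h]
    ring
  rw [kaczmarzStep, add_sub_right_comm, sqNorm_add, sqNorm_smul, dotProduct_smul, h_dot,
    smul_eq_mul]
  field_simp [(sqNorm_pos ha).ne']
  ring

theorem kaczmarzStep_sub_mem {p : Submodule ℝ (Fin n → ℝ)} {a xs y : Fin n → ℝ} (β : ℝ)
    (ha : a ∈ p) (hy : y - xs ∈ p) : kaczmarzStep a β y - xs ∈ p := by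
  rw [kaczmarzStep, add_sub_right_comm]
  exact p.add_mem hy (p.smul_mem _ ha)

theorem sqNorm_le_of_abs_div_sqrt_le {d : ℕ} {r w : Fin d → ℝ} (hw : ∀ i, 0 < w i) {i₀ : Fin d}
    (h : ∀ i, |r i| / √(w i) ≤ |r i₀| / √(w i₀)) : sqNorm r ≤ r i₀ ^ 2 / w i₀ * ∑ i, w i := by
  rw [sqNorm, Finset.mul_sum]
  refine Finset.sum_le_sum fun i _ => (div_le_iff₀ (hw i)).1 ?_
  have h_sq := pow_le_pow_left₀ (by positivity) (h i) 2
  rwa [div_pow, div_pow, sq_abs, sq_abs, Real.sq_sqrt (hw i).le, Real.sq_sqrt (hw i₀).le] at h_sq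

end Kaczmarz

section CountSketchKaczmarz

variable {m n d : ℕ}

noncomputable def cskRate (A : Matrix (Fin m) (Fin n) ℝ) (ε : ℝ) : ℝ :=
  1 - (1 - ε) ^ 3 * sv A A.rank ^ 2 / (n * sv A 1 ^ 2)

theorem one_sub_sq_mul_one_add_le_one {ε : ℝ} (hε0 : 0 ≤ ε) (hε1 : ε ≤ 1) :
    (1 - ε) ^ 2 * (1 + ε) ≤ 1 := by
  nlinarith [mul_nonneg hε0 hε0, mul_nonneg (mul_nonneg hε0 hε0) (sub_nonneg.2 hε1)]

variable {A : Matrix (Fin m) (Fin n) ℝ} {ε : ℝ}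

theorem cskRate_mem_Ico (hA : A ≠ 0) (hε0 : 0 < ε) (hε1 : ε < 1) : cskRate A ε ∈ Set.Ico 0 1 := by
  have hn := one_le_numCols_of_ne_zero hA
  have hσ := sv_rank_pos hA
  have hden := card_mul_sv_one_sq_pos hA
  have h_num_pos : 0 < (1 - ε) ^ 3 * sv A A.rank ^ 2 := by
    have : 0 < 1 - ε := by linarith
    positivity
  have h_num_le : (1 - ε) ^ 3 * sv A A.rank ^ 2 ≤ n * sv A 1 ^ 2 := by
    calc (1 - ε) ^ 3 * sv A A.rank ^ 2 ≤ 1 * sv A 1 ^ 2 :=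
          mul_le_mul (pow_le_one₀ (by linarith) (by linarith))
            (pow_le_pow_left₀ hσ.le (sv_rank_le_sv_one hA) 2) (by positivity) zero_le_one
      _ ≤ n * sv A 1 ^ 2 := by gcongr
  constructor
  · rw [cskRate, sub_nonneg, div_le_one hden]
    exact h_num_le
  · rw [cskRate, sub_lt_self_iff]
    exact div_pos h_num_pos hden

theorem frobSq_le_card_mul_sv_one_sq {B : Matrix (Fin d) (Fin n) ℝ}
    (hB : ∀ v, sqNorm (B *ᵥ v) ≤ (1 + ε) * sqNorm (A *ᵥ v)) (hε : -1 ≤ ε) :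
    frobSq B ≤ n * ((1 + ε) * sv A 1 ^ 2) := by
  refine frobSq_le_card_mul fun v => (hB v).trans ?_
  rw [mul_assoc]
  exact mul_le_mul_of_nonneg_left (sqNorm_mulVec_le_sv_one_sq v) (by linarith)

theorem sqNorm_kaczmarzStep_sub_le_cskRate_mul (hA : A ≠ 0) (hε0 : 0 < ε) (hε1 : ε < 1)
    {B : Matrix (Fin d) (Fin n) ℝ}
    (hB : ∀ v, (1 - ε) * sqNorm (A *ᵥ v) ≤ sqNorm (B *ᵥ v) ∧
      sqNorm (B *ᵥ v) ≤ (1 + ε) * sqNorm (A *ᵥ v))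
    (hrows : ∀ i, B i ≠ 0) {xs y : Fin n → ℝ} (hy : y - xs ∈ rowSpace A) {i₀ : Fin d}
    (hi₀ : ∀ i, |(B *ᵥ xs) i - (B *ᵥ y) i| / √(sqNorm (B i)) ≤
      |(B *ᵥ xs) i₀ - (B *ᵥ y) i₀| / √(sqNorm (B i₀))) :
    sqNorm (kaczmarzStep (B i₀) ((B *ᵥ xs) i₀) y - xs) ≤ cskRate A ε * sqNorm (y - xs) := by
  set D := ((B *ᵥ xs) i₀ - B i₀ ⬝ᵥ y) ^ 2 / sqNorm (B i₀)
  set N := n * sv A 1 ^ 2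
  have hD : 0 ≤ D := div_nonneg (sq_nonneg _) (sqNorm_nonneg _)
  have hN : 0 < N := card_mul_sv_one_sq_pos hA
  have h_res : sqNorm (B *ᵥ (y - xs)) ≤ D * frobSq B := by
    rw [mulVec_sub, ← neg_sub, sqNorm_neg]
    exact sqNorm_le_of_abs_div_sqrt_le (r := B *ᵥ xs - B *ᵥ y) (fun i => sqNorm_pos (hrows i)) hi₀
  have h_low : (1 - ε) * (sv A A.rank ^ 2 * sqNorm (y - xs)) ≤ D * N * (1 + ε) :=
    calc (1 - ε) * (sv A A.rank ^ 2 * sqNorm (y - xs))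
        ≤ (1 - ε) * sqNorm (A *ᵥ (y - xs)) :=
          mul_le_mul_of_nonneg_left (sv_rank_sq_mul_sqNorm_le hA hy) (by linarith)
      _ ≤ D * frobSq B := (hB _).1.trans h_res
      _ ≤ D * (n * ((1 + ε) * sv A 1 ^ 2)) :=
          mul_le_mul_of_nonneg_left
            (frobSq_le_card_mul_sv_one_sq (fun v => (hB v).2) (by linarith)) hD
      _ = D * N * (1 + ε) := by ring
  have h_dec : (1 - ε) ^ 3 * sv A A.rank ^ 2 / N * sqNorm (y - xs) ≤ D :=
    calc (1 - ε) ^ 3 * sv A A.rank ^ 2 / N * sqNorm (y - xs)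
        = (1 - ε) ^ 2 * ((1 - ε) * (sv A A.rank ^ 2 * sqNorm (y - xs))) / N := by ring
      _ ≤ (1 - ε) ^ 2 * (D * N * (1 + ε)) / N := by gcongr
      _ = (1 - ε) ^ 2 * (1 + ε) * D := by field_simp
      _ ≤ D := mul_le_of_le_one_left hD (one_sub_sq_mul_one_add_le_one hε0.le hε1.le)
  rw [sqNorm_kaczmarzStep_sub (xs := xs) (β := (B *ᵥ xs) i₀) rfl, cskRate, sub_mul, one_mul]
  linarith

end CountSketchKaczmarz

/-- geometric convergence of the count-sketch Kaczmarz method: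
`‖x_k - x⋆‖² ≤ ρ^k ‖x₀ - x⋆‖²` with `ρ = 1 - (1-ε)³σ_r(A)²/(n‖A‖₂²) ∈ [0,1)`,
and in particular `x_k → x⋆`. -/
theorem csk_geometric_convergence {m n d : ℕ}
    (A : Matrix (Fin m) (Fin n) ℝ) (hA : A ≠ 0) (b : Fin m → ℝ) (xs : Fin n → ℝ)
    (hxs : A.mulVec xs = b) (hxs_row : ∃ z : Fin m → ℝ, A.transpose.mulVec z = xs)
    (ε : ℝ) (hε0 : 0 < ε) (hε1 : ε < 1)
    (S : Matrix (Fin d) (Fin m) ℝ)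
    (hemb : ∀ v : Fin n → ℝ,
      (1 - ε) * sqNorm (A.mulVec v) ≤ sqNorm ((S * A).mulVec v) ∧
      sqNorm ((S * A).mulVec v) ≤ (1 + ε) * sqNorm (A.mulVec v))
    (hrows : ∀ i : Fin d, (S * A) i ≠ 0)
    (x : ℕ → Fin n → ℝ) (hx0 : ∃ z : Fin m → ℝ, A.transpose.mulVec z = x 0)
    (ik : ℕ → Fin d)
    (hik : ∀ (k : ℕ) (i : Fin d),
      |S.mulVec b i - (S * A).mulVec (x k) i| / Real.sqrt (sqNorm ((S * A) i)) ≤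
      |S.mulVec b (ik k) - (S * A).mulVec (x k) (ik k)|
        / Real.sqrt (sqNorm ((S * A) (ik k))))
    (hupd : ∀ k : ℕ, x (k + 1) = x k +
      ((S.mulVec b (ik k) - ∑ j, (S * A) (ik k) j * x k j) / sqNorm ((S * A) (ik k)))
        • (S * A) (ik k)) :
    (0 ≤ 1 - (1 - ε) ^ 3 * (sv A A.rank) ^ 2 / (n * (sv A 1) ^ 2) ∧
      1 - (1 - ε) ^ 3 * (sv A A.rank) ^ 2 / (n * (sv A 1) ^ 2) < 1) ∧
    (∀ k : ℕ, sqNorm (x k - xs) ≤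
      (1 - (1 - ε) ^ 3 * (sv A A.rank) ^ 2 / (n * (sv A 1) ^ 2)) ^ k
        * sqNorm (x 0 - xs)) ∧
    Filter.Tendsto x Filter.atTop (nhds xs) := by
  have hSb : S.mulVec b = (S * A).mulVec xs := by rw [← hxs, mulVec_mulVec]
  rw [hSb] at hik hupd
  have h_row : ∀ k, x k - xs ∈ rowSpace A := by
    intro k
    induction k with
    | zero => exact sub_mem hx0 hxs_row
    | succ k ih =>
      rw [hupd k]
      exact kaczmarzStep_sub_mem _ (mul_row_mem_rowSpace S A (ik k)) ih
  have hρ := cskRate_mem_Ico hA hε0 hε1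
  have h_geom (k : ℕ) : sqNorm (x k - xs) ≤ cskRate A ε ^ k * sqNorm (x 0 - xs) :=
    le_geom (u := fun k => sqNorm (x k - xs)) hρ.1 k fun j _ => by
      rw [hupd j]
      exact sqNorm_kaczmarzStep_sub_le_cskRate_mul hA hε0 hε1 hemb hrows (h_row j) (hik j)
  refine ⟨hρ, h_geom, tendsto_of_sqNorm_sub_tendsto_zero ?_⟩
  refine squeeze_zero (fun k => sqNorm_nonneg _) h_geom ?_
  simpa using (tendsto_pow_atTop_nhds_zero_of_lt_one hρ.1 hρ.2).mul_const (sqNorm (x 0 - xs))
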